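/- Let (W,S) be a universal Coxeter system and H its Hecke algebra over ℤ[v,v⁻¹]. Define, for each reduced expression x = s₁…s_d, the element b_x recursively by the Dyer formula: b_∅ = 1, b_s = H_s + v, b_{xg} = b_x·b_g when g differs from the last two letters of x, and b_{xr} = b_x·b_r − b_{xb} when x ends in rb (r ≠ b). Then for any reduced expression x ending in the letter b, one has b_x·b_b = (v + v⁻¹)·b_x. -/

import Mathlib

open LaurentPolynomial

variable {S : Type*} [DecidableEq S]
variable {A : Type*} [Ring A] [Algebra (LaurentPolynomial ℤ) A]

/-- `v ∈ ℤ[v,v⁻¹]`. -/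
noncomputable def vv : LaurentPolynomial ℤ := T 1

/-- `v⁻¹ ∈ ℤ[v,v⁻¹]`. -/
noncomputable def vvinv : LaurentPolynomial ℤ := T (-1)

/-- The Kazhdan–Lusztig generator `b_s = H_s + v`. -/
noncomputable def klgen (H : S → A) (s : S) : A :=
  H s + algebraMap (LaurentPolynomial ℤ) A vv

/-- The Kazhdan–Lusztig basis element `b_x` attached to a reduced expression `x`,
defined by Dyer's recursion.  Here the expression is recorded as the *reversed* list
of its letters, so that `klb H (g :: l)` is `b_{xg}` where `l` is the reversal of `x`:
`b_∅ = 1`, `b_s = H_s + v`, `b_{xg} = b_x·b_g` when `x` ends in `rb` and `g ∉ {r, b}`,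
and `b_{xr} = b_x·b_r − b_{xb}` when `x` ends in `rb` with `r ≠ b`. -/
noncomputable def klb (H : S → A) : List S → A
  | [] => 1
  | [s] => klgen H s
  | [s, t] => klb H [t] * klgen H s
  | (g :: b :: r :: rest) =>
      if g = r then klb H (b :: r :: rest) * klgen H g - klb H (r :: rest)
      else klb H (b :: r :: rest) * klgen H g

/-!
By Dyer's recursion, `b_{xb} = b_x b_b - c` where `c` is either `0` or `b_{x'b}` for a shorter
expression `x'b`. Since `b_b² = (v + v⁻¹) b_b` by the quadratic relation, right multiplication
by `b_b` acts on `b_x b_b` as the scalar `v + v⁻¹`, and on `c` by induction on the length.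
-/

section QuadraticRelation

variable {R B : Type*} [CommSemiring R] [Ring B] [Algebra R B]

theorem add_algebraMap_mul_self_eq {h : B} {p q : R}
    (hquad : (h + algebraMap R B p) * (h - algebraMap R B q) = 0) :
    (h + algebraMap R B p) * (h + algebraMap R B p) =
      algebraMap R B (p + q) * (h + algebraMap R B p) := by
  calc (h + algebraMap R B p) * (h + algebraMap R B p)
      = (h + algebraMap R B p) * (h - algebraMap R B q) +
          (h + algebraMap R B p) * algebraMap R B (p + q) := by
        rw [map_add]; noncomm_ring
    _ = algebraMap R B (p + q) * (h + algebraMap R B p) := by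
        rw [hquad, zero_add, Algebra.commutes]

theorem mul_mul_self_eq_of_mul_self_eq {x : B} {r : R}
    (hx : x * x = algebraMap R B r * x) (y : B) :
    y * x * x = algebraMap R B r * (y * x) := by
  rw [mul_assoc, hx, ← mul_assoc, ← Algebra.commutes, mul_assoc]

end QuadraticRelation

theorem klb_cons_cons_cons_self (H : S → A) (g b : S) (rest : List S) :
    klb H (g :: b :: g :: rest) = klb H (b :: g :: rest) * klgen H g - klb H (g :: rest) := by
  simp [klb]

theorem klb_cons_cons_cons_of_ne (H : S → A) {g r : S} (hgr : g ≠ r) (b : S) (rest : List S) :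
    klb H (g :: b :: r :: rest) = klb H (b :: r :: rest) * klgen H g := by
  simp [klb, hgr]

/-- For any reduced expression `x` ending in the letter `b`,
`b_x · b_b = (v + v⁻¹) · b_x`.  (The list `b :: l` is the reversal of `x`.) -/
theorem klb_mul_last (H : S → A)
    (quad : ∀ s : S,
      (H s + algebraMap (LaurentPolynomial ℤ) A vv) *
        (H s - algebraMap (LaurentPolynomial ℤ) A vvinv) = 0)
    (b : S) (l : List S) :
    klb H (b :: l) * klgen H b =
      algebraMap (LaurentPolynomial ℤ) A (vv + vvinv) * klb H (b :: l) :=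
  have hsq : klgen H b * klgen H b =
      algebraMap (LaurentPolynomial ℤ) A (vv + vvinv) * klgen H b :=
    add_algebraMap_mul_self_eq (quad b)
  match l with
  | [] => hsq
  | [r] => mul_mul_self_eq_of_mul_self_eq hsq (klgen H r)
  | r :: r₂ :: rest => by
      by_cases hb : b = r₂
      · subst hb
        rw [klb_cons_cons_cons_self, sub_mul, mul_mul_self_eq_of_mul_self_eq hsq,
          klb_mul_last H quad b rest, mul_sub]
      · rw [klb_cons_cons_cons_of_ne H hb]
        exact mul_mul_self_eq_of_mul_self_eq hsq _
termination_by l.length
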